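/- Define g(p) = sup over integers w ≥ 2 of -w·ln(1 - (1-p)^w), and let H(p) = -p·log₂(p) - (1-p)·log₂(1-p) be the binary entropy. Then H(p) / [(1/g(p))·(ln g(p) + 1)] → ln 2 as p → 0⁺. In other words, the lower bound n·(1/g(p))(ln g(p) + 1) on the expected number of tests for conservative two-stage testing corresponds to an upper bound on the achievable rate that tends to ln 2 ≈ 0.693 in the sparse limit. -/

import Mathlib

/-!
Writing `q = (1 - p) ^ w`, the `w`-th term of `g p` is `log q * log (1 - q) / -log (1 - p)`, and
`log q * log (1 - q) ≤ (log 2) ^ 2` since this function of `q` is concave and symmetric about `1/2`.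
The least `w` with `q ≤ 1/2` nearly attains the bound, so `p * g p → (log 2) ^ 2`. Hence
`log (g p) ~ -log p`, and with `H p ~ p * (-log p) / log 2` the ratio tends to `(log 2) ^ 2 / log 2`.
-/

open Real Filter Set Topology

/-- `g p` is the supremum over integers `w ≥ 2` of `-w·ln(1 - (1-p)^w)`,
appearing in the lower bound for conservative two-stage group testing. -/
noncomputable def conservativeBoundG (p : ℝ) : ℝ :=
  ⨆ w : {w : ℕ // 2 ≤ w}, -((w : ℕ) : ℝ) * Real.log (1 - (1 - p) ^ (w : ℕ))

lemma antitoneOn_log_div_sub_one : AntitoneOn (fun x : ℝ => log x / (x - 1)) (Ioo 0 1) := by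
  intro x hx y hy hxy
  rcases hxy.eq_or_lt with rfl | hlt
  · rfl
  have h := strictConcaveOn_log_Ioi.secant_strict_mono (mem_Ioi.2 one_pos) hx.1 hy.1
    hx.2.ne hy.2.ne hlt
  simp only [log_one, sub_zero] at h
  exact h.le

/- The derivative is written as `S x - S (1 - x)` with `S y = log y / (y - 1)` the slope of `log`
between `1` and `y`; concavity of `log` makes `S` antitone, hence this derivative too. -/
lemma hasDerivAt_log_mul_log_one_sub {x : ℝ} (hx₀ : x ≠ 0) (hx₁ : x ≠ 1) :
    HasDerivAt (fun u => log u * log (1 - u))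
      (log x / (x - 1) - log (1 - x) / (1 - x - 1)) x := by
  have h₁ : 1 - x ≠ 0 := sub_ne_zero.2 hx₁.symm
  have h₁' : x - 1 ≠ 0 := sub_ne_zero.2 hx₁
  refine ((hasDerivAt_log hx₀).mul (((hasDerivAt_id' x).const_sub 1).log h₁)).congr_deriv ?_
  rw [sub_sub_cancel_left]
  field_simp
  ring

lemma concaveOn_log_mul_log_one_sub :
    ConcaveOn ℝ (Ioo 0 1) fun u : ℝ => log u * log (1 - u) := by
  have hderiv : ∀ x ∈ Ioo (0 : ℝ) 1, HasDerivAt (fun u => log u * log (1 - u))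
      (log x / (x - 1) - log (1 - x) / (1 - x - 1)) x := fun x hx =>
    hasDerivAt_log_mul_log_one_sub hx.1.ne' hx.2.ne
  refine AntitoneOn.concaveOn_of_deriv (convex_Ioo 0 1)
    (fun x hx => (hderiv x hx).continuousAt.continuousWithinAt)
    (fun x hx => (hderiv x (interior_subset hx)).differentiableAt.differentiableWithinAt) ?_
  rw [interior_Ioo]
  intro x hx y hy hxy
  rw [(hderiv x hx).deriv, (hderiv y hy).deriv]
  have hx' : 1 - x ∈ Ioo (0 : ℝ) 1 := ⟨sub_pos.2 hx.2, by linarith [hx.1]⟩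
  have hy' : 1 - y ∈ Ioo (0 : ℝ) 1 := ⟨sub_pos.2 hy.2, by linarith [hy.1]⟩
  exact sub_le_sub (antitoneOn_log_div_sub_one hx hy hxy)
    (antitoneOn_log_div_sub_one hy' hx' (by linarith))

lemma log_mul_log_one_sub_le {u : ℝ} (h₀ : 0 < u) (h₁ : u < 1) :
    log u * log (1 - u) ≤ log 2 ^ 2 := by
  have h := concaveOn_log_mul_log_one_sub.2 (⟨h₀, h₁⟩ : u ∈ Ioo (0 : ℝ) 1)
    (⟨sub_pos.2 h₁, by linarith⟩ : 1 - u ∈ Ioo (0 : ℝ) 1) (by norm_num : (0 : ℝ) ≤ 1 / 2)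
    (by norm_num : (0 : ℝ) ≤ 1 / 2) (by norm_num)
  simp only [smul_eq_mul, sub_sub_cancel] at h
  have hhalf : (1 / 2 : ℝ) * u + 1 / 2 * (1 - u) = 2⁻¹ := by ring
  rw [hhalf, show (1 : ℝ) - 2⁻¹ = 2⁻¹ by norm_num, log_inv] at h
  linarith

lemma neg_mul_log_one_sub_pow_le {q : ℝ} (hq₀ : 0 < q) (hq₁ : q < 1) {w : ℕ} (hw : w ≠ 0) :
    -(w : ℝ) * log (1 - q ^ w) ≤ log 2 ^ 2 / -log q := by
  have hlogq : log q < 0 := log_neg hq₀ hq₁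
  calc -(w : ℝ) * log (1 - q ^ w) = log (q ^ w) * log (1 - q ^ w) / -log q := by
        rw [log_pow]; field_simp [hlogq.ne]
    _ ≤ log 2 ^ 2 / -log q :=
        div_le_div_of_nonneg_right
          (log_mul_log_one_sub_le (pow_pos hq₀ w) (pow_lt_one₀ hq₀.le hq₁ hw)) (by linarith)

lemma exists_two_le_and_pow_mem_Ioc {q : ℝ} (hq₀ : 1 / 2 < q) (hq₁ : q < 1) :
    ∃ w : ℕ, 2 ≤ w ∧ q / 2 < q ^ w ∧ q ^ w ≤ 1 / 2 := by
  classical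
  have hex : ∃ n : ℕ, q ^ n ≤ 1 / 2 :=
    (exists_pow_lt_of_lt_one (by norm_num) hq₁).imp fun _ => le_of_lt
  obtain ⟨w, hw, hmin⟩ : ∃ w : ℕ, q ^ w ≤ 1 / 2 ∧ ∀ n < w, ¬ q ^ n ≤ 1 / 2 :=
    ⟨Nat.find hex, Nat.find_spec hex, fun _ => Nat.find_min hex⟩
  have h2 : 2 ≤ w := by
    by_contra! h
    interval_cases w
    · norm_num at hw
    · linarith [pow_one q ▸ hw]
  refine ⟨w, h2, ?_, hw⟩
  have hprev := not_le.1 (hmin (w - 1) (by omega))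
  calc q / 2 < q ^ (w - 1) * q := by nlinarith
    _ = q ^ w := by rw [← pow_succ, Nat.sub_add_cancel (by omega)]

section conservativeBoundG

variable {p : ℝ}

lemma conservativeBoundG_term_le (hp₀ : 0 < p) (hp₁ : p < 1) (w : {w : ℕ // 2 ≤ w}) :
    -((w : ℕ) : ℝ) * log (1 - (1 - p) ^ (w : ℕ)) ≤ log 2 ^ 2 / -log (1 - p) :=
  neg_mul_log_one_sub_pow_le (sub_pos.2 hp₁) (by linarith) (by omega)

lemma conservativeBoundG_le (hp₀ : 0 < p) (hp₁ : p < 1) :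
    conservativeBoundG p ≤ log 2 ^ 2 / -log (1 - p) :=
  have : Nonempty {w : ℕ // 2 ≤ w} := ⟨⟨2, le_rfl⟩⟩
  ciSup_le (conservativeBoundG_term_le hp₀ hp₁)

lemma le_conservativeBoundG (hp₀ : 0 < p) (hp₁ : p < 1 / 2) :
    log 2 * (log 2 - log (1 + p)) / -log (1 - p) ≤ conservativeBoundG p := by
  obtain ⟨w, hw2, hlo, hhi⟩ :=
    exists_two_le_and_pow_mem_Ioc (q := 1 - p) (by linarith) (by linarith)
  have hr : 0 < -log (1 - p) := neg_pos.2 (log_neg (by linarith) (by linarith))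
  have hw : log 2 / -log (1 - p) ≤ w := by
    rw [div_le_iff₀ hr]
    have := log_le_log (pow_pos (by linarith) w) hhi
    rw [log_pow, one_div, log_inv] at this
    linarith
  have hlog : log 2 - log (1 + p) ≤ -log (1 - (1 - p) ^ w) := by
    have := log_le_log (by linarith) (show 1 - (1 - p) ^ w ≤ (1 + p) / 2 by linarith)
    rw [log_div (by linarith) two_ne_zero] at this
    linarith
  have hbdd : BddAbove (range fun w : {w : ℕ // 2 ≤ w} =>
      -((w : ℕ) : ℝ) * log (1 - (1 - p) ^ (w : ℕ))) :=
    ⟨_, forall_mem_range.2 (conservativeBoundG_term_le hp₀ (by linarith))⟩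
  calc log 2 * (log 2 - log (1 + p)) / -log (1 - p)
      = log 2 / -log (1 - p) * (log 2 - log (1 + p)) := by ring
    _ ≤ w * -log (1 - (1 - p) ^ w) := by
        gcongr
        exact sub_nonneg.2 (log_le_log (by linarith) (by linarith))
    _ = -(w : ℝ) * log (1 - (1 - p) ^ w) := by ring
    _ ≤ conservativeBoundG p := le_ciSup hbdd ⟨w, hw2⟩

end conservativeBoundG

lemma tendsto_neg_log_one_sub_div_self :
    Tendsto (fun p : ℝ => -log (1 - p) / p) (𝓝[>] 0) (𝓝 1) := by
  have h : HasDerivAt (fun x : ℝ => -log (1 - x)) 1 0 :=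
    (((hasDerivAt_id' 0).const_sub 1).log (by norm_num)).neg.congr_deriv (by norm_num)
  simpa [div_eq_inv_mul] using h.tendsto_slope_zero_right

lemma tendsto_div_neg_log_one_sub : Tendsto (fun p : ℝ => p / -log (1 - p)) (𝓝[>] 0) (𝓝 1) := by
  simpa using tendsto_neg_log_one_sub_div_self.inv₀ one_ne_zero

lemma tendsto_mul_conservativeBoundG :
    Tendsto (fun p => p * conservativeBoundG p) (𝓝[>] 0) (𝓝 (log 2 ^ 2)) := by
  have hlog : Tendsto (fun p : ℝ => log (1 + p)) (𝓝[>] 0) (𝓝 0) := by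
    have h : ContinuousAt (fun p : ℝ => log (1 + p)) 0 :=
      (continuousAt_const.add continuousAt_id).log (by norm_num)
    simpa using h.tendsto.mono_left nhdsWithin_le_nhds
  have hlower := tendsto_div_neg_log_one_sub.mul
    (((tendsto_const_nhds (x := log 2)).sub hlog).const_mul (log 2))
  have hupper := tendsto_div_neg_log_one_sub.mul_const (log 2 ^ 2)
  rw [sub_zero, one_mul, ← sq] at hlower
  rw [one_mul] at hupper
  have hp : ∀ᶠ p in 𝓝[>] (0 : ℝ), p ∈ Ioo 0 (1 / 2) := Ioo_mem_nhdsGT (by norm_num)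
  refine tendsto_of_tendsto_of_tendsto_of_le_of_le' hlower hupper ?_ ?_
  · filter_upwards [hp] with p hp
    rw [div_mul_eq_mul_div, mul_div_assoc]
    exact mul_le_mul_of_nonneg_left (le_conservativeBoundG hp.1 hp.2) hp.1.le
  · filter_upwards [hp] with p hp
    rw [div_mul_eq_mul_div, mul_div_assoc]
    exact mul_le_mul_of_nonneg_left (conservativeBoundG_le hp.1 (by linarith [hp.2])) hp.1.le

lemma tendsto_inv_neg_log_nhdsGT_zero : Tendsto (fun p : ℝ => (-log p)⁻¹) (𝓝[>] 0) (𝓝 0) :=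
  (tendsto_neg_atBot_atTop.comp tendsto_log_nhdsGT_zero).inv_tendsto_atTop

lemma tendsto_binEntropy_div_mul_neg_log :
    Tendsto (fun p => binEntropy p / (p * -log p)) (𝓝[>] 0) (𝓝 1) := by
  have h1p : Tendsto (fun p : ℝ => 1 - p) (𝓝[>] 0) (𝓝 1) := by
    simpa using (tendsto_const_nhds.sub tendsto_id).mono_left (nhdsWithin_le_nhds (a := (0 : ℝ)))
  have h := (tendsto_const_nhds (x := (1 : ℝ))).add
    ((tendsto_neg_log_one_sub_div_self.mul h1p).mul tendsto_inv_neg_log_nhdsGT_zero)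
  rw [mul_zero, add_zero] at h
  refine h.congr' ?_
  filter_upwards [Ioo_mem_nhdsGT one_pos] with p hp
  have hlog : log p ≠ 0 := (log_neg hp.1 hp.2).ne
  simp only [binEntropy, log_inv]
  field_simp [hp.1.ne']
  ring

lemma tendsto_log_add_one_div_neg_log {f : ℝ → ℝ} {c : ℝ} (hc : 0 < c)
    (hf : Tendsto (fun p => p * f p) (𝓝[>] 0) (𝓝 c)) :
    Tendsto (fun p => (log (f p) + 1) / -log p) (𝓝[>] 0) (𝓝 1) := by
  have h := (tendsto_const_nhds (x := (1 : ℝ))).add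
    (((hf.log hc.ne').add_const 1).mul tendsto_inv_neg_log_nhdsGT_zero)
  rw [mul_zero, add_zero] at h
  refine h.congr' ?_
  filter_upwards [Ioo_mem_nhdsGT one_pos, hf.eventually (lt_mem_nhds hc)] with p hp hpf
  have hlog : log p ≠ 0 := (log_neg hp.1 hp.2).ne
  have hf0 : f p ≠ 0 := right_ne_zero_of_mul hpf.ne'
  rw [log_mul hp.1.ne' hf0]
  field_simp
  ring

lemma tendsto_binEntropy_mul_div_log_add_one {f : ℝ → ℝ} {c : ℝ} (hc : 0 < c)
    (hf : Tendsto (fun p => p * f p) (𝓝[>] 0) (𝓝 c)) :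
    Tendsto (fun p => binEntropy p * f p / (log (f p) + 1)) (𝓝[>] 0) (𝓝 c) := by
  have h := (tendsto_binEntropy_div_mul_neg_log.mul hf).div
    (tendsto_log_add_one_div_neg_log hc hf) one_ne_zero
  rw [one_mul, div_one] at h
  refine h.congr' ?_
  filter_upwards [Ioo_mem_nhdsGT one_pos] with p hp
  have hlog : log p ≠ 0 := (log_neg hp.1 hp.2).ne
  rw [Pi.div_apply, div_div_eq_mul_div]
  congr 1
  field_simp [hp.1.ne']

/-- With `H` the binary entropy, the rate upper bound
`H(p) / [(1/g(p))·(ln g(p) + 1)]` corresponding to the lower bound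
`n·(1/g(p))(ln g(p) + 1)` on the expected number of tests for conservative
two-stage testing tends to `ln 2` as `p → 0⁺`. -/
theorem conservative_rate_upper_bound_limit :
    Filter.Tendsto
      (fun p : ℝ =>
        (-p * Real.logb 2 p - (1 - p) * Real.logb 2 (1 - p)) /
          ((1 / conservativeBoundG p) * (Real.log (conservativeBoundG p) + 1)))
      (nhdsWithin 0 (Set.Ioi 0)) (nhds (Real.log 2)) := by
  have hlog2 : 0 < log 2 := log_pos one_lt_two
  have h := (tendsto_binEntropy_mul_div_log_add_one (pow_pos hlog2 2)
    tendsto_mul_conservativeBoundG).div_const (log 2)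
  rw [sq, mul_div_cancel_right₀ _ hlog2.ne'] at h
  refine h.congr fun p => ?_
  simp only [binEntropy, logb, log_inv, one_div, ← div_div, div_inv_eq_mul]
  ring
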